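/- Let H ∈ ℝ^{V×V} be symmetric positive semidefinite, h ∈ ℝ^V, γ_B > 0, and fix indices i ≠ j and a point β ∈ ℝ^V. Set c = β_i + β_j, D = H_{ii} − H_{ji} − H_{ij} + H_{jj}, and t_{ij} = D β_i − ∑_{k=1}^V (H_{ik} − H_{jk}) β_k. Define φ : ℝ → ℝ by φ(t) = W(β^{(t)}), where β^{(t)}_i = t, β^{(t)}_j = c − t, and β^{(t)}_k = β_k for k ∉ {i, j}, and W(β) = β^T H β + γ_B ‖β‖_2^2 − h^T β. Then t* = (2γ_B c + (h_i − h_j) + 2 t_{ij}) / (2D + 4γ_B) is the unique global minimizer of φ over ℝ. (The coordinate-descent update rule (18) for the kernel weights β.) -/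

import Mathlib

open Matrix Finset

/-- The coordinate-descent update (18) for the kernel weights `β`:
`t* = (2γ_B c + (h_i − h_j) + 2 t_{ij}) / (2D + 4γ_B)` is the unique global minimizer of
`φ(t) = W(β^{(t)})` where `β^{(t)}` agrees with `β` except `β^{(t)}_i = t`, `β^{(t)}_j = c − t`. -/
theorem stmt_10 (V : ℕ) (H : Matrix (Fin V) (Fin V) ℝ) (hH : H.PosSemidef)
    (h : Fin V → ℝ) (γB : ℝ) (hB : 0 < γB)
    (i j : Fin V) (hij : i ≠ j) (β : Fin V → ℝ)
    (c D tij : ℝ) (hc : c = β i + β j)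
    (hD : D = H i i - H j i - H i j + H j j)
    (htij : tij = D * β i - ∑ k, (H i k - H j k) * β k)
    (W : (Fin V → ℝ) → ℝ)
    (hW : ∀ x : Fin V → ℝ, W x = x ⬝ᵥ H.mulVec x + γB * (x ⬝ᵥ x) - h ⬝ᵥ x)
    (φ : ℝ → ℝ)
    (hφ : ∀ t : ℝ, φ t = W (Function.update (Function.update β i t) j (c - t))) :
    ∀ t : ℝ, t ≠ (2 * γB * c + (h i - h j) + 2 * tij) / (2 * D + 4 * γB) →
      φ ((2 * γB * c + (h i - h j) + 2 * tij) / (2 * D + 4 * γB)) < φ t := by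
  intro t ht
  set v : Fin V → ℝ := fun k => if k = i then 1 else if k = j then -1 else 0 with hv
  set y : Fin V → ℝ := Function.update (Function.update β i 0) j c with hy
  have hsym : ∀ a b, H a b = H b a := by
    intro a b
    have := congrFun (congrFun hH.1 b) a
    simpa [Matrix.conjTranspose_apply] using this
  have hdotv : ∀ x : Fin V → ℝ, x ⬝ᵥ v = x i - x j := by
    intro x
    have h1 : ∀ k : Fin V, x k * v k
        = (if k = i then x i else 0) + (if k = j then -(x j) else 0) := by
      intro k
      simp only [hv]
      rcases eq_or_ne k i with rfl | hki
      · simp [hij.symm, hij]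
      · rcases eq_or_ne k j with rfl | hkj
        · simp [hki]
        · simp [hki, hkj]
    simp only [dotProduct]
    rw [Finset.sum_congr rfl fun k _ => h1 k, Finset.sum_add_distrib,
        Finset.sum_ite_eq', Finset.sum_ite_eq']
    simp [sub_eq_add_neg]
  have hmv : ∀ (x : Fin V → ℝ) (k : Fin V), H.mulVec v k = H k i - H k j := by
    intro x k
    have := hdotv (fun l => H k l)
    simpa [Matrix.mulVec, dotProduct] using this
  have hyi : y i = 0 := by
    simp [hy, Function.update_of_ne hij, Function.update_self]
  have hyj : y j = c := by simp [hy]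
  have hyk : ∀ k, k ≠ i → k ≠ j → y k = β k := by
    intro k hki hkj
    simp [hy, Function.update_of_ne hkj, Function.update_of_ne hki]
  -- v ⬝ᵥ H.mulVec v = D
  have hvHv : v ⬝ᵥ H.mulVec v = D := by
    rw [dotProduct_comm, hdotv (H.mulVec v), hmv v i, hmv v j, hD]
    ring
  -- v ⬝ᵥ H.mulVec y = -tij
  have hvHy : v ⬝ᵥ H.mulVec y = -tij := by
    rw [dotProduct_comm, hdotv (H.mulVec y)]
    have hmy : ∀ k : Fin V, H.mulVec y k = ∑ l, H k l * y l := by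
      intro k; simp [Matrix.mulVec, dotProduct]
    rw [hmy i, hmy j, ← Finset.sum_sub_distrib]
    have hsplit : ∀ l : Fin V, H i l * y l - H j l * y l
        = (H i l - H j l) * β l
          + (if l = i then -((H i i - H j i) * β i) else 0)
          + (if l = j then (H i j - H j j) * (c - β j) else 0) := by
      intro l
      rcases eq_or_ne l i with rfl | hli
      · rw [hyi, if_pos rfl, if_neg hij]; ring
      · rcases eq_or_ne l j with rfl | hlj
        · rw [hyj, if_neg hli, if_pos rfl]; ring
        · rw [hyk l hli hlj, if_neg hli, if_neg hlj]; ring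
    rw [Finset.sum_congr rfl fun l _ => hsplit l, Finset.sum_add_distrib,
        Finset.sum_add_distrib, Finset.sum_ite_eq', Finset.sum_ite_eq']
    simp only [Finset.mem_univ, if_true]
    rw [htij, hc, hD]
    ring
  -- y ⬝ᵥ H.mulVec v = -tij (by symmetry of H)
  have hT : Hᵀ = H := by
    ext a b
    exact hsym b a
  have hswap : ∀ a b : Fin V → ℝ, a ⬝ᵥ H.mulVec b = b ⬝ᵥ H.mulVec a := by
    intro a b
    rw [Matrix.dotProduct_mulVec, ← Matrix.mulVec_transpose, hT, dotProduct_comm]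
  have hyHv : y ⬝ᵥ H.mulVec v = -tij := by
    rw [hswap]; exact hvHy
  have hyv : y ⬝ᵥ v = -c := by rw [hdotv y, hyi, hyj]; ring
  have hvy : v ⬝ᵥ y = -c := by rw [dotProduct_comm]; exact hyv
  have hvv : v ⬝ᵥ v = 2 := by
    rw [hdotv v]
    simp only [hv, if_pos rfl, if_neg hij.symm]
    norm_num [hij.symm]
  have hhv : h ⬝ᵥ v = h i - h j := hdotv h
  -- the update equals y + t • v
  have hupd : ∀ s : ℝ, Function.update (Function.update β i s) j (c - s) = y + s • v := by
    intro s
    funext k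
    rcases eq_or_ne k j with rfl | hkj
    · simp [hv, hyj, hij.symm]; ring
    · rcases eq_or_ne k i with rfl | hki
      · simp [hv, hyi, Function.update_of_ne hkj]
      · simp [hv, hki, hkj, hyk k hki hkj, Function.update_of_ne hkj,
          Function.update_of_ne hki]
  -- φ is an explicit quadratic
  have hquad : ∀ s : ℝ, φ s = (D + 2 * γB) * s ^ 2
      + (-(2 * tij) - 2 * γB * c - (h i - h j)) * s
      + (y ⬝ᵥ H.mulVec y + γB * (y ⬝ᵥ y) - h ⬝ᵥ y) := by
    intro s
    rw [hφ, hW, hupd]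
    rw [Matrix.mulVec_add, Matrix.mulVec_smul]
    simp only [dotProduct_add, add_dotProduct, dotProduct_smul, smul_dotProduct,
      smul_eq_mul]
    rw [hvHv, hvHy, hyHv, hyv, hvy, hvv, hhv]
    ring
  -- D ≥ 0 from positive semidefiniteness
  have hD0 : 0 ≤ D := by
    have := hH.dotProduct_mulVec_nonneg v
    simpa [hvHv] using this
  have ha : 0 < D + 2 * γB := by linarith
  have hden : (2 * D + 4 * γB) ≠ 0 := by positivity
  set t0 : ℝ := (2 * γB * c + (h i - h j) + 2 * tij) / (2 * D + 4 * γB) with ht0def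
  have ht0 : t0 * (2 * D + 4 * γB) = 2 * γB * c + (h i - h j) + 2 * tij :=
    div_mul_cancel₀ _ hden
  rw [hquad t, hquad t0]
  have hb : (-(2 * tij) - 2 * γB * c - (h i - h j)) = -(2 * D + 4 * γB) * t0 := by
    linarith
  have hsq : 0 < (t - t0) ^ 2 := by
    have : t - t0 ≠ 0 := sub_ne_zero.2 ht
    positivity
  rw [hb]
  nlinarith [mul_pos ha hsq]
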